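/- arXiv:1612.01696 — 8 statements merged into one kernel-verified Lean document; each statement's English description precedes it below -/
import Mathlib

section
/- Let K be a convex body in R^d and let eps > 0. There exists an invertible affine transformation T : R^d -> R^d such that T(K) is in (1/d)-canonical form, i.e. closedBall(0, 1/(2d)) ⊆ T(K) ⊆ closedBall(0, 1/2); moreover, for every point q in R^d whose Euclidean distance to K is greater than eps * diam(K), the distance from T(q) to T(K) is greater than eps/d. -/
open Metric

set_option maxHeartbeats 1000000

noncomputable section CanonicalFormAux

namespace CanonicalAux

open Module
open scoped RealInnerProductSpace

variable {F : Type*} [NormedAddCommGroup F] [InnerProductSpace ℝ F] [FiniteDimensional ℝ F]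


open scoped RealInnerProductSpace

variable {F : Type*} [NormedAddCommGroup F] [InnerProductSpace ℝ F] [FiniteDimensional ℝ F]

/-- The linear map `y ↦ b • y + ((a-b) * ⟪v,y⟫) • v`. -/
def stretch (v : F) (a b : ℝ) : F →ₗ[ℝ] F where
  toFun y := b • y + ((a - b) * ⟪v, y⟫) • v
  map_add' y z := by
    simp only [inner_add_right]
    module
  map_smul' r y := by
    simp only [real_inner_smul_right, RingHom.id_apply]
    module

@[simp] lemma stretch_apply (v : F) (a b : ℝ) (y : F) :
    stretch v a b y = b • y + ((a - b) * ⟪v, y⟫) • v := rfl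

lemma det_stretch (v : F) (hv : ‖v‖ = 1) (a b : ℝ) :
    LinearMap.det (stretch v a b) = a * b ^ (finrank ℝ F - 1) := by
  classical
  have hvv : ⟪v, v⟫ = 1 := by
    rw [real_inner_self_eq_norm_sq, hv]; norm_num
  have hon : Orthonormal ℝ ((↑) : ({v} : Set F) → F) := by
    constructor
    · rintro ⟨i, hi⟩
      simp only [Set.mem_singleton_iff] at hi
      simpa [hi] using hv
    · rintro ⟨i, hi⟩ ⟨j, hj⟩ hij
      simp only [Set.mem_singleton_iff] at hi hj
      exact absurd (Subtype.ext (hi.trans hj.symm)) hij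
  obtain ⟨u, ob, hvu, hob⟩ := hon.exists_orthonormalBasis_extension
  have hvmem : v ∈ u := hvu rfl
  set j₀ : ↥u := ⟨v, hvmem⟩ with hj₀
  have hobj : ∀ j : ↥u, ob j = (j : F) := fun j => by rw [hob]
  have hM : ∀ j : ↥u, stretch v a b (ob.toBasis j)
      = (if j = j₀ then a else b) • ob.toBasis j := by
    intro j
    rw [ob.coe_toBasis, hobj]
    by_cases h : j = j₀
    · subst h
      simp [hj₀, hvv]
      rw [hv]; module
    · have hinner : ⟪v, (j : F)⟫ = 0 := by
        have := ob.orthonormal.2 (i := j₀) (j := j) (Ne.symm h)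
        simpa [hobj, hj₀] using this
      simp [h, hinner]
  have hmat : LinearMap.toMatrix ob.toBasis ob.toBasis (stretch v a b)
      = Matrix.diagonal (fun j : ↥u => if j = j₀ then a else b) := by
    ext i j
    rw [LinearMap.toMatrix_apply, hM j, map_smul, Basis.repr_self, Matrix.diagonal_apply]
    rcases eq_or_ne i j with rfl | hij
    · split_ifs <;> simp_all
    · split_ifs <;> simp [Finsupp.single_apply, Ne.symm hij]
  have hcard : Fintype.card ↥u = finrank ℝ F := (finrank_eq_card_basis ob.toBasis).symm
  have hcardpos : 0 < Fintype.card ↥u := Fintype.card_pos_iff.mpr ⟨j₀⟩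
  rw [← LinearMap.det_toMatrix ob.toBasis, hmat, Matrix.det_diagonal]
  rw [← Finset.mul_prod_erase Finset.univ _ (Finset.mem_univ j₀)]
  simp only [if_pos rfl]
  congr 1
  rw [Finset.prod_congr rfl (fun j hj => if_neg (Finset.ne_of_mem_erase hj)),
    Finset.prod_const, Finset.card_erase_of_mem (Finset.mem_univ j₀), Finset.card_univ, hcard]








omit [FiniteDimensional ℝ F] in
lemma norm_sq_combo {v w : F} (hv : ‖v‖ = 1) (hvw : ⟪v, w⟫ = 0) (c e : ℝ) :
    ‖c • v + e • w‖ ^ 2 = c ^ 2 + e ^ 2 * ‖w‖ ^ 2 := by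
  rw [norm_add_sq_real, real_inner_smul_left, real_inner_smul_right, hvw,
    norm_smul, norm_smul, mul_pow, mul_pow, hv]
  simp [sq_abs]

lemma exists_better (C : Set F) (hC : Convex ℝ C) (hball : closedBall (0:F) 1 ⊆ C)
    {x : F} (hx : x ∈ C) (hs : (finrank ℝ F : ℝ) < ‖x‖) :
    ∃ (M : F →ₗ[ℝ] F) (c : F),
      (∀ y ∈ closedBall (0:F) 1, c + M y ∈ C) ∧ 1 < |LinearMap.det M| := by
  classical
  obtain ⟨n, hn⟩ : ∃ n, n = finrank ℝ F := ⟨_, rfl⟩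
  rw [← hn] at hs
  have hd1 : 1 ≤ n := by
    rcases Nat.eq_zero_or_pos n with h0 | h; swap; · exact h
    exfalso
    have hsub : Subsingleton F := finrank_zero_iff.mp (hn.symm.trans (by rw [h0]) : _)
    have hx0 : x = (0:F) := Subsingleton.elim x 0
    rw [hx0, norm_zero, h0] at hs
    exact absurd hs (by norm_num)
  obtain ⟨s, hsdef⟩ : ∃ s : ℝ, s = ‖x‖ := ⟨_, rfl⟩
  rw [← hsdef] at hs
  have hdR : (1:ℝ) ≤ (n:ℝ) := by exact_mod_cast hd1
  have hs1 : 1 < s := lt_of_le_of_lt hdR hs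
  have hspos : 0 < s := lt_trans one_pos hs1
  have hnpos : (0:ℝ) < n := lt_of_lt_of_le one_pos hdR
  obtain ⟨v, hvdef⟩ : ∃ v : F, v = s⁻¹ • x := ⟨_, rfl⟩
  have hv : ‖v‖ = 1 := by
    rw [hvdef, norm_smul, norm_inv, Real.norm_eq_abs, abs_of_pos hspos, ← hsdef,
      inv_mul_cancel₀ (ne_of_gt hspos)]
  have hxv : x = s • v := by
    rw [hvdef, smul_smul, mul_inv_cancel₀ (ne_of_gt hspos), one_smul]
  have hvv : ⟪v, v⟫ = 1 := by
    rw [real_inner_self_eq_norm_sq, hv]; norm_num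
  obtain ⟨τ, hτdef⟩ : ∃ τ : ℝ, τ = (s - n) / (4 * n * s) := ⟨_, rfl⟩
  have hτpos : 0 < τ := by rw [hτdef]; exact div_pos (by linarith) (by positivity)
  have hτn : 4 * (n:ℝ) * τ ≤ 1 := by
    rw [hτdef, mul_comm (4 * (n:ℝ))]
    rw [div_mul_eq_mul_div, div_le_one (by positivity)]
    nlinarith
  have hτ4 : τ ≤ 1 / 4 := by
    nlinarith [mul_nonneg (sub_nonneg.mpr hdR) hτpos.le]
  have hτkey : 2 * (n:ℝ) * s * τ = (s - n) / 2 := by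
    rw [hτdef]; field_simp; ring
  obtain ⟨t, htdef⟩ : ∃ t : ℝ, t = τ * (s - 1) := ⟨_, rfl⟩
  have htpos : 0 < t := by rw [htdef]; exact mul_pos hτpos (by linarith)
  obtain ⟨a, hadef⟩ : ∃ a : ℝ, a = 1 + t := ⟨_, rfl⟩
  have hapos : 0 < a := by rw [hadef]; linarith
  obtain ⟨β, hβdef⟩ : ∃ β : ℝ, β = 1 - 2 * τ := ⟨_, rfl⟩
  have hβhalf : 1 / 2 ≤ β := by rw [hβdef]; linarith
  have hβpos : 0 < β := by linarith
  obtain ⟨b, hbdef⟩ : ∃ b : ℝ, b = Real.sqrt β := ⟨_, rfl⟩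
  have hb2 : b ^ 2 = β := by rw [hbdef]; exact Real.sq_sqrt (le_of_lt hβpos)
  have hbpos : 0 < b := by rw [hbdef]; exact Real.sqrt_pos.mpr hβpos
  refine ⟨stretch v a b, t • v, ?_, ?_⟩
  · -- containment
    intro y hy
    rw [mem_closedBall, dist_zero_right] at hy
    obtain ⟨p, hpdef⟩ : ∃ p : ℝ, p = ⟪v, y⟫ := ⟨_, rfl⟩
    have hp : |p| ≤ 1 := by
      rw [hpdef]
      calc |⟪v, y⟫| ≤ ‖v‖ * ‖y‖ := abs_real_inner_le_norm v y
      _ ≤ 1 := by rw [hv]; simpa using hy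
    have hp1 : -1 ≤ p := neg_le_of_abs_le hp
    have hp2 : p ≤ 1 := le_of_abs_le hp
    obtain ⟨w, hwdef⟩ : ∃ w : F, w = y - p • v := ⟨_, rfl⟩
    have hvw : ⟪v, w⟫ = 0 := by
      rw [hwdef, inner_sub_right, real_inner_smul_right, hvv, ← hpdef]
      ring
    have hy_decomp : y = p • v + w := by rw [hwdef]; abel
    have hwnorm : ‖w‖ ^ 2 ≤ 1 - p ^ 2 := by
      have h1 : ‖y‖ ^ 2 = p ^ 2 + ‖w‖ ^ 2 := by
        have h := norm_sq_combo hv hvw p 1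
        rw [one_smul, one_pow, one_mul] at h
        rw [hy_decomp, h]
      nlinarith [norm_nonneg y]
    obtain ⟨μ, hμdef⟩ : ∃ μ : ℝ, μ = τ * (1 + p) := ⟨_, rfl⟩
    have hμ0 : 0 ≤ μ := by rw [hμdef]; exact mul_nonneg (le_of_lt hτpos) (by linarith)
    have hμ1 : μ < 1 := by
      have h2τ : μ ≤ 2 * τ := by
        rw [hμdef]
        have h := mul_nonneg hτpos.le (show (0:ℝ) ≤ 1 - p by linarith)
        linarith
      linarith
    have h1μ : 0 < 1 - μ := by linarith
    obtain ⟨q, hqdef⟩ : ∃ q : ℝ, q = t + a * p - μ * s := ⟨_, rfl⟩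
    have hkey : q ^ 2 + β * (1 - p ^ 2) = (1 - μ) ^ 2 := by
      rw [hqdef, htdef, hadef, hμdef, hβdef, htdef]; ring
    obtain ⟨Z, hZdef⟩ : ∃ Z : F, Z = q • v + b • w := ⟨_, rfl⟩
    have hZnorm2 : ‖Z‖ ^ 2 = q ^ 2 + b ^ 2 * ‖w‖ ^ 2 := by
      rw [hZdef, norm_sq_combo hv hvw]
    have hZle : ‖Z‖ ≤ 1 - μ := by
      have h1 : ‖Z‖ ^ 2 ≤ (1 - μ) ^ 2 := by
        rw [hZnorm2, ← hkey, hb2]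
        have := mul_le_mul_of_nonneg_left hwnorm hβpos.le
        linarith
      nlinarith [norm_nonneg Z, h1μ]
    obtain ⟨zB, hzBdef⟩ : ∃ zB : F, zB = (1 - μ)⁻¹ • Z := ⟨_, rfl⟩
    have hzB : zB ∈ closedBall (0:F) 1 := by
      have hn1 : ‖zB‖ ≤ 1 := by
        rw [hzBdef, norm_smul, norm_inv, Real.norm_eq_abs, abs_of_pos h1μ]
        calc (1 - μ)⁻¹ * ‖Z‖ ≤ (1 - μ)⁻¹ * (1 - μ) :=
              mul_le_mul_of_nonneg_left hZle (by positivity)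
        _ = 1 := inv_mul_cancel₀ (ne_of_gt h1μ)
      simpa [mem_closedBall, dist_zero_right] using hn1
    have hdecomp : t • v + stretch v a b y = (1 - μ) • zB + μ • x := by
      rw [hzBdef, smul_smul, mul_inv_cancel₀ (ne_of_gt h1μ), one_smul,
        stretch_apply, hZdef, hxv]
      conv_lhs => rw [hy_decomp]
      rw [inner_add_right, real_inner_smul_right, hvv, hvw, hpdef, hqdef, hpdef]
      module
    show t • v + stretch v a b y ∈ C
    rw [hdecomp]
    exact hC (hball hzB) hx (le_of_lt h1μ) hμ0 (by ring)
  · -- determinant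
    rw [det_stretch v hv a b, ← hn]
    have hbpow : 0 < b ^ (n - 1) := pow_pos hbpos _
    rw [abs_of_pos (mul_pos hapos hbpow)]
    have hsq : (a * b ^ (n - 1)) ^ 2 = a ^ 2 * β ^ (n - 1) := by
      rw [mul_pow, ← pow_mul, mul_comm (n-1) 2, pow_mul, hb2]
    have hcast : ((n - 1 : ℕ) : ℝ) = (n:ℝ) - 1 := by
      push_cast [Nat.cast_sub hd1]
      ring
    have hbern : (1:ℝ) - 2 * ((n:ℝ) - 1) * τ ≤ β ^ (n - 1) := by
      have h := one_add_mul_le_pow (a := -2 * τ) (by linarith) (n - 1)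
      calc (1:ℝ) - 2 * ((n:ℝ) - 1) * τ = 1 + ((n - 1 : ℕ) : ℝ) * (-2 * τ) := by
            rw [hcast]; ring
      _ ≤ (1 + -2 * τ) ^ (n - 1) := h
      _ = β ^ (n - 1) := by rw [hβdef]; ring_nf
    have hstep : 1 < a ^ 2 * β ^ (n - 1) := by
      have h1 : a ^ 2 * (1 - 2 * ((n:ℝ) - 1) * τ) ≤ a ^ 2 * β ^ (n - 1) :=
        mul_le_mul_of_nonneg_left hbern (sq_nonneg a)
      have h2 : 1 < a ^ 2 * (1 - 2 * ((n:ℝ) - 1) * τ) := by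
        have hmargin : 2 * ((n:ℝ) - 1) * (s - 1) * τ ≤ (s - n) / 2 := by
          nlinarith [hτkey, mul_nonneg hτpos.le (show (0:ℝ) ≤ (n:ℝ) + s - 1 by linarith)]
        have ha2 : 1 + 2 * t ≤ a ^ 2 := by rw [hadef]; nlinarith [sq_nonneg t]
        have hpos2 : 0 < 1 - 2 * ((n:ℝ) - 1) * τ := by linarith
        have h7 : (1 + 2 * t) * (1 - 2 * ((n:ℝ) - 1) * τ) =
            1 + 2 * τ * ((s - n) - 2 * ((n:ℝ) - 1) * (s - 1) * τ) := by
          rw [htdef]; ring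
        have h8 : (1 + 2 * t) * (1 - 2 * ((n:ℝ) - 1) * τ) ≤
            a ^ 2 * (1 - 2 * ((n:ℝ) - 1) * τ) :=
          mul_le_mul_of_nonneg_right ha2 hpos2.le
        have h9 : 0 < τ * (s - n) := mul_pos hτpos (by linarith)
        have h10 : 2 * τ * (2 * ((n:ℝ) - 1) * (s - 1) * τ) ≤ 2 * τ * ((s - n) / 2) :=
          mul_le_mul_of_nonneg_left hmargin (by positivity)
        nlinarith [h7, h8, h9, h10]
      linarith
    nlinarith [mul_pos hapos hbpow, hsq, hstep]








lemma dist_part (d : ℕ) (hd : 0 < d) (K : Set F)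
    (hK_compact : IsCompact K) (hK_conv : Convex ℝ K) (hKne : K.Nonempty)
    (hdiam : 0 < diam K)
    (T : F ≃ᵃ[ℝ] F) (hball : closedBall (0:F) (1 / (2 * d)) ⊆ T '' K)
    (eps : ℝ) (heps : 0 < eps) (q : F) (hq : infDist q K > eps * diam K) :
    infDist (T q) (T '' K) > eps / d := by
  classical
  have hdR : (0:ℝ) < d := by exact_mod_cast hd
  obtain ⟨δ, hδdef⟩ : ∃ δ : ℝ, δ = infDist q K := ⟨_, rfl⟩
  rw [← hδdef] at hq
  have hδpos : 0 < δ := lt_trans (by positivity) hq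
  obtain ⟨p, hpK, hpd⟩ := hK_compact.exists_infDist_eq_dist hKne q
  have hup : ‖q - p‖ = δ := by rw [← dist_eq_norm, ← hpd, hδdef]
  -- variational inequality
  have hproj : ∀ y ∈ K, ⟪q - p, y - p⟫ ≤ 0 := by
    apply (norm_eq_iInf_iff_real_inner_le_zero hK_conv hpK).mp
    have : infDist q K = ⨅ w : K, ‖q - w‖ := by
      rw [infDist_eq_iInf]
      congr 1
      ext w
      rw [dist_eq_norm]
    rw [← this, ← hδdef, hup]
  obtain ⟨u, hudef⟩ : ∃ u : F, u = q - p := ⟨_, rfl⟩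
  have hu : ‖u‖ = δ := by rw [hudef, hup]
  have huu : ⟪u, u⟫ = δ ^ 2 := by rw [real_inner_self_eq_norm_sq, hu]
  -- the dual functional
  obtain ⟨w, hwdef⟩ : ∃ w : F,
      w = (LinearMap.adjoint (T.linear.symm : F →ₗ[ℝ] F)) u := ⟨_, rfl⟩
  have hwinner : ∀ z : F, ⟪w, z⟫ = ⟪u, T.linear.symm z⟫ := by
    intro z
    rw [hwdef, LinearMap.adjoint_inner_left]
    rfl
  -- linear part of T on differences
  have hTdiff : ∀ y z : F, T.linear.symm (T y - T z) = y - z := by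
    intro y z
    have h1 : T y - T z = T.linear (y - z) := by
      have h := (T : F →ᵃ[ℝ] F).linearMap_vsub y z
      simp only [vsub_eq_sub, AffineEquiv.coe_coe, AffineEquiv.linear_toAffineMap] at h
      rw [← h]
      rfl
    rw [h1, LinearEquiv.symm_apply_apply]
  have hkey : ∀ y ∈ K, δ ^ 2 ≤ ⟪w, T q - T y⟫ := by
    intro y hy
    rw [hwinner, hTdiff]
    have h1 : q - y = u + (p - y) := by rw [hudef]; abel
    rw [h1, inner_add_right, huu]
    have h2 : ⟪u, p - y⟫ = -⟪u, y - p⟫ := by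
      rw [← inner_neg_right]; congr 1; abel
    have h3 := hproj y hy
    rw [hudef] at h2 ⊢
    rw [h2]
    linarith [h3]
  have hwne : w ≠ 0 := by
    intro h0
    have h1 := hkey p hpK
    rw [h0, inner_zero_left] at h1
    nlinarith
  have hwpos : 0 < ‖w‖ := norm_pos_iff.mpr hwne
  -- bound on ‖w‖ : take the two points ± r • (w/‖w‖) in T '' K
  obtain ⟨r, hrdef⟩ : ∃ r : ℝ, r = 1 / (2 * (d:ℝ)) := ⟨_, rfl⟩
  have hrpos : 0 < r := by rw [hrdef]; positivity
  have hzmem : ∀ σ : ℝ, |σ| = 1 → (σ * r * ‖w‖⁻¹) • w ∈ T '' K := by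
    intro σ hσ
    apply hball
    rw [mem_closedBall, dist_zero_right, norm_smul, Real.norm_eq_abs, abs_mul, abs_mul,
      hσ, one_mul, abs_of_pos hrpos, abs_of_pos (inv_pos.mpr hwpos), hrdef]
    rw [mul_assoc, inv_mul_cancel₀ (ne_of_gt hwpos), mul_one]
  obtain ⟨y₁, hy₁K, hy₁⟩ := hzmem 1 (by norm_num)
  obtain ⟨y₂, hy₂K, hy₂⟩ := hzmem (-1) (by norm_num)
  have hdiff : T y₁ - T y₂ = (2 * r * ‖w‖⁻¹) • w := by
    rw [hy₁, hy₂]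
    rw [← sub_smul]
    congr 1
    ring
  have hinner_diff : ⟪w, T y₁ - T y₂⟫ = 2 * r * ‖w‖ := by
    rw [hdiff, real_inner_smul_right, real_inner_self_eq_norm_sq]
    field_simp
  have hbound : 2 * r * ‖w‖ ≤ δ * diam K := by
    rw [← hinner_diff, hwinner, hTdiff]
    calc ⟪u, y₁ - y₂⟫ ≤ ‖u‖ * ‖y₁ - y₂‖ := real_inner_le_norm u (y₁ - y₂)
    _ ≤ δ * diam K := by
        rw [hu]
        apply mul_le_mul_of_nonneg_left _ (le_of_lt hδpos)
        rw [← dist_eq_norm]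
        exact dist_le_diam_of_mem hK_compact.isBounded hy₁K hy₂K
  have hwle : ‖w‖ ≤ d * δ * diam K := by
    have : 2 * r = 1 / d := by rw [hrdef]; field_simp
    rw [this] at hbound
    rw [div_mul_eq_mul_div, one_mul, div_le_iff₀ hdR] at hbound
    linarith [hbound]
  -- conclude
  have hTKne : (T '' K).Nonempty := hKne.image T
  have hlow : ∀ z ∈ T '' K, δ ^ 2 / ‖w‖ ≤ dist (T q) z := by
    rintro z ⟨y, hyK, rfl⟩
    have h1 := hkey y hyK
    have h2 : ⟪w, T q - T y⟫ ≤ ‖w‖ * ‖T q - T y‖ := real_inner_le_norm _ _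
    rw [div_le_iff₀ hwpos, dist_eq_norm]
    calc δ ^ 2 ≤ ‖w‖ * ‖T q - T y‖ := le_trans h1 h2
    _ = ‖T q - T y‖ * ‖w‖ := by ring
  have hinf : δ ^ 2 / ‖w‖ ≤ infDist (T q) (T '' K) := by
    rw [infDist_eq_iInf]
    have : Nonempty (T '' K : Set F) := hTKne.to_subtype
    exact le_ciInf fun z => hlow z z.2
  have hfinal : eps / d < δ ^ 2 / ‖w‖ := by
    have h1 : δ ^ 2 / ‖w‖ ≥ δ ^ 2 / (d * δ * diam K) := by
      apply div_le_div_of_nonneg_left (by positivity) (by positivity) hwle |>.trans_eq rfl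
    have h2 : δ ^ 2 / ((d:ℝ) * δ * diam K) = δ / (d * diam K) := by
      field_simp
    have h3 : eps / d < δ / (d * diam K) := by
      rw [div_lt_div_iff₀ hdR (by positivity)]
      calc eps * (d * diam K) = (eps * diam K) * d := by ring
      _ < δ * d := by
          apply mul_lt_mul_of_pos_right hq hdR
    calc eps / d < δ / ((d:ℝ) * diam K) := h3
    _ = δ ^ 2 / ((d:ℝ) * δ * diam K) := h2.symm
    _ ≤ δ ^ 2 / ‖w‖ := h1
  exact lt_of_lt_of_le hfinal hinf






theorem main_aux {E : Type*} [NormedAddCommGroup E] [InnerProductSpace ℝ E]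
    [FiniteDimensional ℝ E] (d : ℕ) (hd : 0 < d) (hfr : finrank ℝ E = d)
    (K : Set E)
    (hK_compact : IsCompact K) (hK_conv : Convex ℝ K)
    (hK_int : (interior K).Nonempty)
    (eps : ℝ) (heps : 0 < eps) :
    ∃ T : E ≃ᵃ[ℝ] E,
      closedBall 0 (1 / (2 * d)) ⊆ T '' K ∧ T '' K ⊆ closedBall 0 (1 / 2) ∧
      ∀ q : E,
        infDist q K > eps * diam K → infDist (T q) (T '' K) > eps / d := by
  classical
  obtain ⟨x₀, hx₀⟩ := hK_int
  have hKne : K.Nonempty := ⟨x₀, interior_subset hx₀⟩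
  rw [mem_interior_iff_mem_nhds, Metric.mem_nhds_iff] at hx₀
  obtain ⟨ε, hεpos, hεball⟩ := hx₀
  obtain ⟨ρ, hρdef⟩ : ∃ ρ : ℝ, ρ = ε / 2 := ⟨_, rfl⟩
  have hρpos : 0 < ρ := by rw [hρdef]; linarith
  have hcb : closedBall x₀ ρ ⊆ K :=
    le_trans (closedBall_subset_ball (by rw [hρdef]; linarith)) hεball
  -- diameter is positive
  have hdiam : 0 < diam K := by
    have hnt : Nontrivial E := by
      apply Module.nontrivial_of_finrank_pos (R := ℝ)
      rw [hfr]; exact hd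
    obtain ⟨w0, hw0⟩ := exists_ne (0:E)
    have hw0pos : 0 < ‖w0‖ := norm_pos_iff.mpr hw0
    have he1 : ‖(‖w0‖⁻¹ • w0 : E)‖ = 1 := by
      rw [norm_smul, norm_inv, Real.norm_eq_abs, abs_of_pos hw0pos,
        inv_mul_cancel₀ (ne_of_gt hw0pos)]
    set e : E := ‖w0‖⁻¹ • w0 with hedef
    have h1 : x₀ + ρ • e ∈ K := by
      apply hcb
      rw [mem_closedBall, dist_eq_norm, add_sub_cancel_left, norm_smul, he1,
        Real.norm_eq_abs, abs_of_pos hρpos, mul_one]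
    have h2 : x₀ ∈ K := hcb (mem_closedBall_self (le_of_lt hρpos))
    have h3 : dist (x₀ + ρ • e) x₀ = ρ := by
      rw [dist_eq_norm, add_sub_cancel_left, norm_smul, he1, Real.norm_eq_abs,
        abs_of_pos hρpos, mul_one]
    have h4 := dist_le_diam_of_mem hK_compact.isBounded h1 h2
    rw [h3] at h4
    linarith
  -- boundedness of K
  obtain ⟨R₀, hR₀⟩ := hK_compact.isBounded.subset_closedBall (0:E)
  obtain ⟨R, hRdef⟩ : ∃ R : ℝ, R = max R₀ 0 := ⟨_, rfl⟩
  have hR0 : 0 ≤ R := by rw [hRdef]; exact le_max_right _ _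
  have hKR : K ⊆ closedBall 0 R :=
    le_trans hR₀ (closedBall_subset_closedBall (by rw [hRdef]; exact le_max_left _ _))
  have hKnorm : ∀ z ∈ K, ‖z‖ ≤ R := by
    intro z hz
    have := hKR hz
    rwa [mem_closedBall, dist_zero_right] at this
  -- the candidate set of affine images of the unit ball inside K
  set S : Set ((E →L[ℝ] E) × E) :=
    {Lc | ∀ y ∈ closedBall (0:E) 1, Lc.2 + Lc.1 y ∈ K} with hSdef
  set φ : (E →L[ℝ] E) × E → ℝ :=
    fun Lc => |LinearMap.det (Lc.1 : E →ₗ[ℝ] E)| with hφdef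
  -- continuity of φ
  have hφcont : Continuous φ := by
    set bE := Module.finBasis ℝ E with hbE
    have h0 : Continuous fun L : E →L[ℝ] E =>
        LinearMap.toMatrix bE bE (L : E →ₗ[ℝ] E) := by
      exact LinearMap.continuous_of_finiteDimensional
        (((LinearMap.toMatrix bE bE).toLinearMap).comp (ContinuousLinearMap.coeLM ℝ))
    have h1 : Continuous fun Lc : (E →L[ℝ] E) × E =>
        (LinearMap.toMatrix bE bE (Lc.1 : E →ₗ[ℝ] E)).det :=
      (h0.comp continuous_fst).matrix_det
    have h2 : ∀ Lc : (E →L[ℝ] E) × E,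
        (LinearMap.toMatrix bE bE (Lc.1 : E →ₗ[ℝ] E)).det
          = LinearMap.det (Lc.1 : E →ₗ[ℝ] E) := fun Lc => LinearMap.det_toMatrix bE _
    have h3 : Continuous fun Lc : (E →L[ℝ] E) × E =>
        LinearMap.det (Lc.1 : E →ₗ[ℝ] E) := by
      simpa only [h2] using h1
    exact h3.abs
  -- S is closed
  have hSclosed : IsClosed S := by
    have : S = ⋂ (y : E) (_ : y ∈ closedBall (0:E) 1),
        {Lc : (E →L[ℝ] E) × E | Lc.2 + Lc.1 y ∈ K} := by
      ext Lc
      simp only [hSdef, Set.mem_setOf_eq, Set.mem_iInter]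
    rw [this]
    refine isClosed_iInter fun y => isClosed_iInter fun _ => ?_
    exact IsClosed.preimage
      (continuous_snd.add ((ContinuousLinearMap.apply ℝ E y).continuous.comp continuous_fst))
      hK_compact.isClosed
  -- S is bounded
  have hSbdd : Bornology.IsBounded S := by
    apply (isBounded_closedBall (x := (0 : (E →L[ℝ] E) × E)) (r := 2 * R + R + 1)).subset
    intro Lc hLc
    have hc : Lc.2 ∈ K := by
      have := hLc 0 (mem_closedBall_self (by norm_num))
      simpa using this
    have hcn : ‖Lc.2‖ ≤ R := hKnorm _ hc
    have hLn : ‖Lc.1‖ ≤ 2 * R := by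
      apply ContinuousLinearMap.opNorm_le_bound _ (by linarith)
      intro z
      rcases eq_or_ne z 0 with rfl | hz
      · simp
      · have hzpos : 0 < ‖z‖ := norm_pos_iff.mpr hz
        have hy : ‖z‖⁻¹ • z ∈ closedBall (0:E) 1 := by
          rw [mem_closedBall, dist_zero_right, norm_smul, norm_inv, Real.norm_eq_abs,
            abs_of_pos hzpos, inv_mul_cancel₀ (ne_of_gt hzpos)]
        have hmem := hLc _ hy
        have h5 : ‖Lc.1 (‖z‖⁻¹ • z)‖ ≤ 2 * R := by
          have h6 : ‖Lc.2 + Lc.1 (‖z‖⁻¹ • z)‖ ≤ R := hKnorm _ hmem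
          calc ‖Lc.1 (‖z‖⁻¹ • z)‖
              = ‖Lc.2 + Lc.1 (‖z‖⁻¹ • z) - Lc.2‖ := by congr 1; abel
          _ ≤ ‖Lc.2 + Lc.1 (‖z‖⁻¹ • z)‖ + ‖Lc.2‖ := norm_sub_le _ _
          _ ≤ 2 * R := by linarith
        have h7 : Lc.1 z = ‖z‖ • Lc.1 (‖z‖⁻¹ • z) := by
          rw [← map_smul, smul_smul, mul_inv_cancel₀ (ne_of_gt hzpos), one_smul]
        rw [h7, norm_smul, Real.norm_eq_abs, abs_of_pos hzpos, mul_comm (2 * R)]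
        exact mul_le_mul_of_nonneg_left h5 (le_of_lt hzpos)
    rw [mem_closedBall, dist_eq_norm, sub_zero, Prod.norm_def]
    exact max_le (by linarith) (by linarith)
  have hScompact : IsCompact S := Metric.isCompact_of_isClosed_isBounded hSclosed hSbdd
  -- S contains a candidate with positive determinant
  have hmem0 : ((ρ • ContinuousLinearMap.id ℝ E, x₀) : (E →L[ℝ] E) × E) ∈ S := by
    intro y hy
    rw [mem_closedBall, dist_zero_right] at hy
    apply hcb
    rw [mem_closedBall, dist_eq_norm]
    simp only [ContinuousLinearMap.coe_smul', Pi.smul_apply, ContinuousLinearMap.coe_id', id_eq]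
    rw [add_sub_cancel_left, norm_smul, Real.norm_eq_abs, abs_of_pos hρpos]
    calc ρ * ‖y‖ ≤ ρ * 1 := mul_le_mul_of_nonneg_left hy (le_of_lt hρpos)
    _ = ρ := mul_one ρ
  have hφ0 : φ ((ρ • ContinuousLinearMap.id ℝ E, x₀)) = ρ ^ d := by
    simp only [hφdef]
    have hcoe : ((ρ • ContinuousLinearMap.id ℝ E : E →L[ℝ] E) : E →ₗ[ℝ] E)
        = ρ • (LinearMap.id : E →ₗ[ℝ] E) := by
      ext z; simp
    rw [hcoe, LinearMap.det_smul, LinearMap.det_id, mul_one, hfr,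
      abs_pow, abs_of_pos hρpos]
  -- maximizer
  obtain ⟨Lc₀, hLc₀S, hmax⟩ := hScompact.exists_isMaxOn ⟨_, hmem0⟩ hφcont.continuousOn
  have hmax' : ∀ Lc ∈ S, φ Lc ≤ φ Lc₀ := fun Lc hLc => hmax hLc
  have hφpos : 0 < φ Lc₀ := by
    calc (0:ℝ) < ρ ^ d := pow_pos hρpos d
    _ = φ ((ρ • ContinuousLinearMap.id ℝ E, x₀)) := hφ0.symm
    _ ≤ φ Lc₀ := hmax' _ hmem0
  have hdet0 : LinearMap.det (Lc₀.1 : E →ₗ[ℝ] E) ≠ 0 := by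
    intro h
    rw [hφdef] at hφpos
    simp only [h, abs_zero] at hφpos
    exact lt_irrefl 0 hφpos
  set L₀ : E →L[ℝ] E := Lc₀.1 with hL₀def
  set c₀ : E := Lc₀.2 with hc₀def
  set L₀e : E ≃ₗ[ℝ] E := LinearMap.equivOfDetNeZero _ hdet0 with hL₀edef
  have hL₀e : ∀ z, L₀e z = L₀ z := fun z => rfl
  set T₁ : E ≃ᵃ[ℝ] E :=
    (AffineEquiv.constVAdd ℝ E (-c₀)).trans L₀e.symm.toAffineEquiv with hT₁def
  have hT₁ : ∀ z, T₁ z = L₀e.symm (-c₀ + z) := fun z => rfl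
  have hT₁s : ∀ z, T₁.symm z = c₀ + L₀e z := by
    intro z
    have h1 : T₁ (c₀ + L₀e z) = z := by
      rw [hT₁, neg_add_cancel_left, LinearEquiv.symm_apply_apply]
    calc T₁.symm z = T₁.symm (T₁ (c₀ + L₀e z)) := by rw [h1]
    _ = c₀ + L₀e z := T₁.symm_apply_apply _
  have himg : ∀ z, z ∈ T₁ '' K ↔ c₀ + L₀ z ∈ K := by
    intro z
    constructor
    · rintro ⟨k, hk, rfl⟩
      rw [← hL₀e, ← hT₁s, T₁.symm_apply_apply]
      exact hk
    · intro h
      refine ⟨c₀ + L₀ z, h, ?_⟩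
      rw [← hL₀e, ← hT₁s]
      exact T₁.apply_symm_apply z
  have hball1 : closedBall (0:E) 1 ⊆ T₁ '' K := by
    intro y hy
    rw [himg]
    exact hLc₀S y hy
  have hconv1 : Convex ℝ (T₁ '' K) := by
    have := hK_conv.affine_image (T₁ : E →ᵃ[ℝ] E)
    simpa [AffineEquiv.coe_coe] using this
  have hbd1 : ∀ z ∈ T₁ '' K, ‖z‖ ≤ (d:ℝ) := by
    by_contra hcon
    push_neg at hcon
    obtain ⟨z, hz, hzd⟩ := hcon
    obtain ⟨M, cM, hMcont, hMdet⟩ := exists_better (T₁ '' K) hconv1 hball1 hz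
      (by rw [hfr]; exact hzd)
    have hnew : ((L₀.comp (LinearMap.toContinuousLinearMap M), c₀ + L₀ cM) :
        (E →L[ℝ] E) × E) ∈ S := by
      intro y hy
      have h1 := hMcont y hy
      rw [himg] at h1
      show c₀ + L₀ cM + (L₀.comp (LinearMap.toContinuousLinearMap M)) y ∈ K
      have h2 : c₀ + L₀ cM + (L₀.comp (LinearMap.toContinuousLinearMap M)) y
          = c₀ + L₀ (cM + M y) := by
        rw [map_add, ContinuousLinearMap.comp_apply, add_assoc]
        rfl
      rw [h2]
      exact h1
    have hφnew : φ Lc₀ < φ (L₀.comp (LinearMap.toContinuousLinearMap M), c₀ + L₀ cM) := by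
      have hcoe2 : ((L₀.comp (LinearMap.toContinuousLinearMap M) : E →L[ℝ] E) : E →ₗ[ℝ] E)
          = (L₀ : E →ₗ[ℝ] E).comp M := by
        ext z; simp
      show φ Lc₀ < |LinearMap.det ((L₀.comp (LinearMap.toContinuousLinearMap M) :
        E →L[ℝ] E) : E →ₗ[ℝ] E)|
      rw [hcoe2, LinearMap.det_comp, abs_mul]
      calc φ Lc₀ = |LinearMap.det (L₀ : E →ₗ[ℝ] E)| * 1 := by rw [mul_one]
      _ < |LinearMap.det (L₀ : E →ₗ[ℝ] E)| * |LinearMap.det M| := by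
          apply mul_lt_mul_of_pos_left hMdet
          exact hφpos
    exact absurd (hmax' _ hnew) (not_le.mpr hφnew)
  -- rescale
  have hdR : (0:ℝ) < d := by exact_mod_cast hd
  have hc2ne : ((2 * (d:ℝ))⁻¹ : ℝ) ≠ 0 := by positivity
  set T : E ≃ᵃ[ℝ] E :=
    T₁.trans (LinearEquiv.smulOfNeZero ℝ E _ hc2ne).toAffineEquiv with hTdef
  have hT : ∀ z, T z = (2 * (d:ℝ))⁻¹ • T₁ z := fun z => rfl
  have hsub2 : T '' K ⊆ closedBall 0 (1 / 2) := by
    rintro _ ⟨k, hk, rfl⟩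
    rw [mem_closedBall, dist_zero_right, hT, norm_smul, norm_inv, Real.norm_eq_abs,
      abs_of_pos (by positivity : (0:ℝ) < 2 * (d:ℝ))]
    have h1 : ‖T₁ k‖ ≤ (d:ℝ) := hbd1 _ ⟨k, hk, rfl⟩
    calc (2 * (d:ℝ))⁻¹ * ‖T₁ k‖ ≤ (2 * (d:ℝ))⁻¹ * (d:ℝ) := by
          apply mul_le_mul_of_nonneg_left h1 (by positivity)
    _ = 1 / 2 := by field_simp
  have hsub1 : closedBall 0 (1 / (2 * (d:ℝ))) ⊆ T '' K := by
    intro z hz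
    rw [mem_closedBall, dist_zero_right] at hz
    have h1 : (2 * (d:ℝ)) • z ∈ closedBall (0:E) 1 := by
      rw [mem_closedBall, dist_zero_right, norm_smul, Real.norm_eq_abs,
        abs_of_pos (by positivity : (0:ℝ) < 2 * (d:ℝ))]
      calc 2 * (d:ℝ) * ‖z‖ ≤ 2 * (d:ℝ) * (1 / (2 * (d:ℝ))) :=
            mul_le_mul_of_nonneg_left hz (by positivity)
      _ = 1 := by field_simp
    obtain ⟨k, hk, hkeq⟩ := hball1 h1
    refine ⟨k, hk, ?_⟩
    rw [hT, hkeq, smul_smul, inv_mul_cancel₀ (by positivity : (2 * (d:ℝ)) ≠ 0), one_smul]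
  exact ⟨T, hsub1, hsub2, fun q hq =>
    dist_part d hd K hK_compact hK_conv hKne hdiam T hsub1 eps heps q hq⟩


end CanonicalAux

end CanonicalFormAux

/-- Lemma `canonical`: any convex body in `ℝ^d` can be mapped by an
invertible affine transformation into `(1/d)`-canonical form, in a way that points at
distance more than `ε · diam K` from `K` are mapped to points at distance more than
`ε / d` from the image of `K`. -/
theorem canonical_form_exists (d : ℕ) (hd : 0 < d)
    (K : Set (EuclideanSpace ℝ (Fin d)))
    (hK_compact : IsCompact K) (hK_conv : Convex ℝ K)
    (hK_int : (interior K).Nonempty)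
    (eps : ℝ) (heps : 0 < eps) :
    ∃ T : EuclideanSpace ℝ (Fin d) ≃ᵃ[ℝ] EuclideanSpace ℝ (Fin d),
      closedBall 0 (1 / (2 * d)) ⊆ T '' K ∧ T '' K ⊆ closedBall 0 (1 / 2) ∧
      ∀ q : EuclideanSpace ℝ (Fin d),
        infDist q K > eps * diam K → infDist (T q) (T '' K) > eps / d := by
  exact CanonicalAux.main_aux d hd finrank_euclideanSpace_fin K hK_compact hK_conv
    hK_int eps heps
end

section
/- Let K be a convex body in R^d, let C be a cap of K, and let rho >= 1. Then the Lebesgue measure (volume) of the rho-expansion C^rho is at most rho^d times the volume of C. -/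
open Set MeasureTheory Metric

/-! If `z ∈ K` maximizes `⟨u, ·⟩`, the homothety of ratio `ρ` centred at `z` maps `C` onto a
superset of `C^ρ`: by convexity the inverse homothety keeps `K` inside itself and moves the level
`max - ρ·width` up to `c`. Homotheties of ratio `ρ` multiply volume by `ρ^d`. -/
open AffineMap in
theorem Convex.sep_le_subset_image_homothety {𝕜 E : Type*} [Field 𝕜] [LinearOrder 𝕜]
    [IsStrictOrderedRing 𝕜] [AddCommGroup E] [Module 𝕜 E] {K : Set E} (hK : Convex 𝕜 K)
    (f : E →ᵃ[𝕜] 𝕜) {z : E} (hz : z ∈ K) (c : 𝕜) {ρ : 𝕜} (hρ : 1 ≤ ρ) :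
    {x ∈ K | f z - ρ * (f z - c) ≤ f x} ⊆ homothety z ρ '' {x ∈ K | c ≤ f x} := by
  rintro x ⟨hxK, hx⟩
  have hρ₀ : 0 < ρ := zero_lt_one.trans_le hρ
  refine ⟨homothety z ρ⁻¹ x, ⟨?_, ?_⟩, ?_⟩
  · rw [homothety_eq_lineMap]
    exact hK.lineMap_mem hz hxK ⟨by positivity, inv_le_one_of_one_le₀ hρ⟩
  · rw [homothety_eq_lineMap, f.apply_lineMap, lineMap_apply_ring']
    calc c = ρ⁻¹ * (-(ρ * (f z - c))) + f z := by field_simp; ring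
      _ ≤ ρ⁻¹ * (f x - f z) + f z := by gcongr; linarith
  · rw [← homothety_mul_apply, mul_inv_cancel₀ hρ₀.ne', homothety_one, id_apply]

theorem volume_cap_expansion_le_general (d : ℕ)
    (K : Set (EuclideanSpace ℝ (Fin d)))
    (hK_compact : IsCompact K) (hK_conv : Convex ℝ K)
    (u : EuclideanSpace ℝ (Fin d)) (c : ℝ)
    (C : Set (EuclideanSpace ℝ (Fin d)))
    (hC : C = {x ∈ K | c ≤ (inner ℝ u x : ℝ)}) (hCne : C.Nonempty)
    (rho : ℝ) (hrho : 1 ≤ rho) :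
    volume {x ∈ K |
        sSup ((fun y => (inner ℝ u y : ℝ)) '' K)
          - rho * (sSup ((fun y => (inner ℝ u y : ℝ)) '' K) - c) ≤ (inner ℝ u x : ℝ)}
      ≤ ENNReal.ofReal (rho ^ d) * volume C := by
  set f : EuclideanSpace ℝ (Fin d) →ᵃ[ℝ] ℝ := (innerSL ℝ u).toLinearMap.toAffineMap
  have hKne : K.Nonempty := (hC ▸ hCne).mono (sep_subset _ _)
  obtain ⟨z, hzK, hz⟩ :=
    (hK_compact.image f.continuous_of_finiteDimensional).sSup_mem (hKne.image f)
  calc _ ≤ volume (AffineMap.homothety z rho '' C) :=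
        measure_mono (hC ▸ hz ▸ hK_conv.sep_le_subset_image_homothety f hzK c hrho)
    _ = ENNReal.ofReal (rho ^ d) * volume C := by
        rw [Measure.addHaar_image_homothety, finrank_euclideanSpace_fin,
          abs_of_nonneg (by positivity)]

/-- Lemma `cap-exp`: for a cap `C` of a convex body `K` and `ρ ≥ 1`,
the volume of the `ρ`-expansion `C^ρ` is at most `ρ^d` times the volume of `C`. -/
theorem volume_cap_expansion_le (d : ℕ)
    (K : Set (EuclideanSpace ℝ (Fin d)))
    (hK_compact : IsCompact K) (hK_conv : Convex ℝ K)
    (hK_int : (interior K).Nonempty)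
    (u : EuclideanSpace ℝ (Fin d)) (hu : ‖u‖ = 1) (c : ℝ)
    (C : Set (EuclideanSpace ℝ (Fin d)))
    (hC : C = {x ∈ K | c ≤ (inner ℝ u x : ℝ)}) (hCne : C.Nonempty)
    (rho : ℝ) (hrho : 1 ≤ rho) :
    volume {x ∈ K |
        sSup ((fun y => (inner ℝ u y : ℝ)) '' K)
          - rho * (sSup ((fun y => (inner ℝ u y : ℝ)) '' K) - c) ≤ (inner ℝ u x : ℝ)}
      ≤ ENNReal.ofReal (rho ^ d) * volume C :=
  volume_cap_expansion_le_general d K hK_compact hK_conv u c C hC hCne rho hrho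
end

section
/- Let K be a convex body in R^d and let lambda be a real with 0 < lambda <= 1/5. If x, y ∈ K are such that the Macbeath regions M^lambda(x) and M^lambda(y) have nonempty intersection, then M^lambda(y) ⊆ M^{4·lambda}(x). -/
open Set Metric
open scoped Pointwise

/-- The Macbeath region `M^λ(x) = x + λ((K − x) ∩ (x − K))`. -/
def macbeath {d : ℕ} (K : Set (EuclideanSpace ℝ (Fin d)))
    (x : EuclideanSpace ℝ (Fin d)) (lam : ℝ) : Set (EuclideanSpace ℝ (Fin d)) :=
  (fun v => x + lam • v) '' ((K - {x}) ∩ ({x} - K))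

/-! Write `C(x) = {v | x + v ∈ K ∧ x - v ∈ K}`, so that `M^λ(x) = x + λ C(x)`. A common point
`x + λa = y + λb` with `a ∈ C(x)`, `b ∈ C(y)` gives `y = x + λ(a - b)`, and a point of `M^λ(y)` is
`w = y + λc` with `c ∈ C(y)`; then `w = x + 4λ · (a - b + c)/4`. The vector `(a - b + c)/4` lies in
`C(x)` by convexity: the midpoint of `x + a` and `y - b` is `x + (1 + λ)/2 · (a - b)`, hence
`x + (1 - λ)/3 · (a - b) ∈ K` on the segment from `x`, and `3/4` of this plus `1/4` of `y + c` is
`x + (a - b + c)/4`. The segment step needs `(1 - λ)/3 ≤ (1 + λ)/2`, i.e. `λ ≥ -1/5`; applying the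
same argument to `-λ, -a, -b, -c` gives the other sign and needs `λ ≤ 1/5`. -/

lemma mem_macbeath_iff {d : ℕ} {K : Set (EuclideanSpace ℝ (Fin d))}
    {x w : EuclideanSpace ℝ (Fin d)} {lam : ℝ} :
    w ∈ macbeath K x lam ↔ ∃ v, x + v ∈ K ∧ x - v ∈ K ∧ w = x + lam • v := by
  simp only [macbeath, sub_singleton, singleton_sub, mem_image, mem_inter_iff]
  constructor
  · rintro ⟨_, ⟨⟨k, hk, rfl⟩, k', hk', hkk'⟩, rfl⟩
    exact ⟨k - x, by rwa [add_sub_cancel], by rwa [← hkk', sub_sub_cancel], rfl⟩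
  · rintro ⟨v, hplus, hminus, rfl⟩
    exact ⟨v, ⟨⟨x + v, hplus, add_sub_cancel_left x v⟩, x - v, hminus, sub_sub_cancel x v⟩, rfl⟩

lemma Convex.add_quarter_smul_mem {E : Type*} [AddCommGroup E] [Module ℝ E] {K : Set E}
    (hK : Convex ℝ K) {x y a b c : E} {lam : ℝ} (hlam₀ : -(1 / 5) ≤ lam) (hlam₁ : lam ≤ 1)
    (hx : x ∈ K) (ha : x + a ∈ K) (hb : y - b ∈ K) (hc : y + c ∈ K)
    (hxy : y = x + lam • (a - b)) :
    x + (1 / 4 : ℝ) • (a - b + c) ∈ K := by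
  have hmid : x + ((1 + lam) / 2) • (a - b) ∈ K := by
    convert hK ha hb (by norm_num : (0 : ℝ) ≤ 1 / 2) (by norm_num : (0 : ℝ) ≤ 1 / 2)
      (by norm_num) using 1
    rw [hxy]
    module
  have hseg : x + ((1 - lam) / 3) • (a - b) ∈ K := by
    have hpos : 0 < 1 + lam := by linarith
    have ht : 2 * (1 - lam) / (3 * (1 + lam)) ∈ Icc (0 : ℝ) 1 := by
      constructor
      · exact div_nonneg (by linarith) (by positivity)
      · rw [div_le_one (by positivity)]
        linarith
    convert hK.add_smul_mem hx hmid ht using 2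
    rw [smul_smul]
    congr 1
    field_simp
  convert hK hseg hc (by norm_num : (0 : ℝ) ≤ 3 / 4) (by norm_num : (0 : ℝ) ≤ 1 / 4)
    (by norm_num) using 1
  rw [hxy]
  module

theorem macbeath_subset_of_inter_general (d : ℕ)
    (K : Set (EuclideanSpace ℝ (Fin d)))
    (hK_conv : Convex ℝ K)
    (lam : ℝ) (hlam0 : 0 < lam) (hlam : lam ≤ 1 / 5)
    (x y : EuclideanSpace ℝ (Fin d)) (hx : x ∈ K)
    (hinter : (macbeath K x lam ∩ macbeath K y lam).Nonempty) :
    macbeath K y lam ⊆ macbeath K x (4 * lam) := by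
  obtain ⟨z, hzx, hzy⟩ := hinter
  obtain ⟨a, hxa, hxa', rfl⟩ := mem_macbeath_iff.mp hzx
  obtain ⟨b, hyb, hyb', hz⟩ := mem_macbeath_iff.mp hzy
  have hyx : y = x + lam • (a - b) := by
    linear_combination (norm := module) -hz
  rintro _ hw
  obtain ⟨c, hyc, hyc', rfl⟩ := mem_macbeath_iff.mp hw
  refine mem_macbeath_iff.mpr ⟨(1 / 4 : ℝ) • (a - b + c), ?_, ?_, by rw [hyx]; module⟩
  · exact hK_conv.add_quarter_smul_mem (by linarith) (by linarith) hx hxa hyb' hyc hyx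
  · have h := hK_conv.add_quarter_smul_mem (lam := -lam) (a := -a) (b := -b) (c := -c)
      (by linarith) (by linarith) hx (by simpa [sub_eq_add_neg] using hxa')
      (by simpa using hyb) (by simpa [sub_eq_add_neg] using hyc') (by rw [hyx]; module)
    convert h using 1
    module

/-- Lemma `mac-mac`: if `0 < λ ≤ 1/5` and the Macbeath regions
`M^λ(x)` and `M^λ(y)` of two points `x, y ∈ K` intersect, then `M^λ(y) ⊆ M^{4λ}(x)`. -/
theorem macbeath_subset_of_inter (d : ℕ)
    (K : Set (EuclideanSpace ℝ (Fin d)))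
    (hK_compact : IsCompact K) (hK_conv : Convex ℝ K)
    (hK_int : (interior K).Nonempty)
    (lam : ℝ) (hlam0 : 0 < lam) (hlam : lam ≤ 1 / 5)
    (x y : EuclideanSpace ℝ (Fin d)) (hx : x ∈ K) (hy : y ∈ K)
    (hinter : (macbeath K x lam ∩ macbeath K y lam).Nonempty) :
    macbeath K y lam ⊆ macbeath K x (4 * lam) :=
  macbeath_subset_of_inter_general d K hK_conv lam hlam0 hlam x y hx hinter
end

section
/- Let K be a convex body in R^d, let lambda > 0, let C be a cap of K, and let x be a point of C. Then M^lambda(x) ∩ K ⊆ C^{1+lambda}. Furthermore, if lambda <= 1, then M^lambda(x) ⊆ C^{1+lambda}. -/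
open Set Metric
open scoped Pointwise

/-- The `ρ`-expansion of the cap of `K` determined by the unit vector `u` and offset `c`. -/
def capExp {d : ℕ} (K : Set (EuclideanSpace ℝ (Fin d)))
    (u : EuclideanSpace ℝ (Fin d)) (c rho : ℝ) : Set (EuclideanSpace ℝ (Fin d)) :=
  {x ∈ K | sSup ((fun y => (inner ℝ u y : ℝ)) '' K)
      - rho * (sSup ((fun y => (inner ℝ u y : ℝ)) '' K) - c) ≤ (inner ℝ u x : ℝ)}

/-- Lemma `mac1`: if `x` lies in a cap `C` of a convex body `K` and
`λ > 0`, then `M^λ(x) ∩ K ⊆ C^{1+λ}`; moreover if `λ ≤ 1` then `M^λ(x) ⊆ C^{1+λ}`. -/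
theorem macbeath_inter_subset_capExp (d : ℕ)
    (K : Set (EuclideanSpace ℝ (Fin d)))
    (hK_compact : IsCompact K) (hK_conv : Convex ℝ K)
    (hK_int : (interior K).Nonempty)
    (lam : ℝ) (hlam : 0 < lam)
    (u : EuclideanSpace ℝ (Fin d)) (hu : ‖u‖ = 1) (c : ℝ)
    (C : Set (EuclideanSpace ℝ (Fin d)))
    (hC : C = {x ∈ K | c ≤ (inner ℝ u x : ℝ)}) (hCne : C.Nonempty)
    (x : EuclideanSpace ℝ (Fin d)) (hx : x ∈ C) :
    macbeath K x lam ∩ K ⊆ capExp K u c (1 + lam) ∧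
      (lam ≤ 1 → macbeath K x lam ⊆ capExp K u c (1 + lam)) := by
  subst hC
  obtain ⟨hxK, hxc⟩ := hx
  set f : EuclideanSpace ℝ (Fin d) → ℝ := fun y => (inner ℝ u y : ℝ) with hf_def
  have hf : Continuous f := (innerSL ℝ u).continuous
  have hbdd : BddAbove (f '' K) := (hK_compact.image hf).bddAbove
  set s : ℝ := sSup (f '' K) with hs_def
  have hle : ∀ k ∈ K, f k ≤ s := fun k hk => le_csSup hbdd ⟨k, hk, rfl⟩
  -- key inequality: any point of the Macbeath region satisfies the inner bound
  have key : ∀ z ∈ macbeath K x lam, s - (1 + lam) * (s - c) ≤ f z := by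
    rintro z ⟨v, ⟨hv1, hv2⟩, rfl⟩
    rw [Set.mem_sub] at hv2
    obtain ⟨a, ha, b, hb, hab⟩ := hv2
    rw [Set.mem_singleton_iff] at ha
    rw [ha] at hab
    have hfb : f b ≤ s := hle b hb
    have hfx : c ≤ f x := hxc
    have hexp : f (x + lam • v) = f x + lam * f v := by
      simp only [hf_def, inner_add_right, real_inner_smul_right]
    have hfv : f v = f x - f b := by
      rw [← hab]; simp only [hf_def, inner_sub_right]
    rw [hexp, hfv]
    nlinarith
  have keyK : ∀ z ∈ macbeath K x lam, lam ≤ 1 → z ∈ K := by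
    rintro z ⟨v, ⟨hv1, hv2⟩, rfl⟩ hlam1
    rw [Set.mem_sub] at hv1
    obtain ⟨a, ha, b, hb, hab⟩ := hv1
    rw [Set.mem_singleton_iff] at hb
    rw [hb] at hab
    show x + lam • v ∈ K
    have heq : x + lam • v = (1 - lam) • x + lam • a := by
      rw [← hab]; module
    rw [heq]
    exact hK_conv hxK ha (by linarith) (le_of_lt hlam) (by ring)
  constructor
  · rintro z ⟨hz1, hz2⟩
    exact ⟨hz2, key z hz1⟩
  · intro hlam1 z hz
    exact ⟨keyK z hz hlam1, key z hz⟩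
end

section
/- Let K be a convex body in R^d, let C be a cap of K, and let x ∈ K be such that the shrunken Macbeath region M'(x) = M^{1/5}(x) has nonempty intersection with C. Then M'(x) ⊆ C^2. -/
open Set Metric
open scoped Pointwise

/-- Lemma `cap-mac`: if the shrunken Macbeath region `M'(x) = M^{1/5}(x)`
of a point `x ∈ K` meets a cap `C` of `K`, then `M'(x) ⊆ C²`. -/
theorem shrunken_macbeath_subset_capExp_two (d : ℕ)
    (K : Set (EuclideanSpace ℝ (Fin d)))
    (hK_compact : IsCompact K) (hK_conv : Convex ℝ K)
    (hK_int : (interior K).Nonempty)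
    (u : EuclideanSpace ℝ (Fin d)) (hu : ‖u‖ = 1) (c : ℝ)
    (C : Set (EuclideanSpace ℝ (Fin d)))
    (hC : C = {x ∈ K | c ≤ (inner ℝ u x : ℝ)}) (hCne : C.Nonempty)
    (x : EuclideanSpace ℝ (Fin d)) (hx : x ∈ K)
    (hinter : (macbeath K x (1 / 5) ∩ C).Nonempty) :
    macbeath K x (1 / 5) ⊆ capExp K u c 2 := by
  set f : EuclideanSpace ℝ (Fin d) → ℝ := fun y => (inner ℝ u y : ℝ) with hf
  have hcont : Continuous f := Continuous.inner continuous_const continuous_id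
  have hbdd : BddAbove (f '' K) := (hK_compact.image hcont).bddAbove
  set w : ℝ := sSup (f '' K) with hw
  have hle : ∀ y ∈ K, f y ≤ w := fun y hy => le_csSup hbdd ⟨y, hy, rfl⟩
  -- w ≥ c since C is nonempty
  obtain ⟨y₀, hy₀⟩ := hCne
  rw [hC] at hy₀
  have hwc : c ≤ w := le_trans hy₀.2 (hle y₀ hy₀.1)
  -- extract membership helpers
  have hmem : ∀ v, v ∈ (K - ({x} : Set _)) ∩ ({x} - K) → x + v ∈ K ∧ x - v ∈ K := by
    intro v ⟨h1, h2⟩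
    obtain ⟨a, ha, b, hb, hab⟩ := h1
    obtain ⟨a', ha', b', hb', hab'⟩ := h2
    rw [Set.mem_singleton_iff] at hb ha'
    constructor
    · have : x + v = a := by rw [← hab, hb]; module
      rwa [this]
    · have : x - v = b' := by rw [← hab', ha']; module
      rwa [this]
  -- the witness point in the intersection
  obtain ⟨p, hpM, hpC⟩ := hinter
  obtain ⟨vp, hvp, hpeq⟩ := hpM
  obtain ⟨hvp1, hvp2⟩ := hmem vp hvp
  rw [hC] at hpC
  have hpc : c ≤ f p := hpC.2
  have hpin : f p = f x + (1/5) * f vp := by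
    simp only [hf, ← hpeq, inner_add_right, real_inner_smul_right]
  have hA : f x + f vp ≤ w := by
    have := hle _ hvp1
    simpa only [hf, inner_add_right] using this
  -- now take any q in the Macbeath region
  rintro q ⟨v, hv, rfl⟩
  obtain ⟨hv1, hv2⟩ := hmem v hv
  have hqK : x + (1/5 : ℝ) • v ∈ K := by
    have h := hK_conv hx hv1 (by norm_num : (0:ℝ) ≤ 4/5) (by norm_num : (0:ℝ) ≤ 1/5)
      (by norm_num)
    have heq : (4/5 : ℝ) • x + (1/5 : ℝ) • (x + v) = x + (1/5 : ℝ) • v := by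
      rw [smul_add]
      rw [← add_assoc, ← add_smul]
      norm_num
    rwa [heq] at h
  have hB : f x - f v ≤ w := by
    have := hle _ hv2
    simpa only [hf, inner_sub_right] using this
  refine ⟨hqK, ?_⟩
  have hqin : (inner ℝ u (x + (1/5 : ℝ) • v) : ℝ) = f x + (1/5) * f v := by
    simp only [hf, inner_add_right, real_inner_smul_right]
  rw [← hw, hqin]
  rw [hpin] at hpc
  linarith
end

section
/- Let K be a convex body in R^d in gamma-canonical form for gamma in (0,1], and let x ∈ K with x ≠ 0. Let p be the point where the ray from the origin O through x meets the boundary of K, i.e. p ∈ frontier(K) with p = s·x for some real s >= 1. Then delta(x) <= ||x − p|| <= delta(x)/gamma. -/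
open Set Metric

/-- Lemma `raydist-delta`: for a convex body `K` in `γ`-canonical form
and a point `x ∈ K`, `x ≠ 0`, if `p` is the point where the ray from the origin through
`x` meets `∂K`, then `δ(x) ≤ ‖x − p‖ ≤ δ(x)/γ`. -/
theorem delta_le_raydist_le (d : ℕ) (gamma : ℝ) (hγ0 : 0 < gamma) (hγ1 : gamma ≤ 1)
    (K : Set (EuclideanSpace ℝ (Fin d)))
    (hK_compact : IsCompact K) (hK_conv : Convex ℝ K)
    (hK_int : (interior K).Nonempty)
    (hK_ball : closedBall 0 (gamma / 2) ⊆ K) (hK_ball' : K ⊆ closedBall 0 (1 / 2))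
    (x : EuclideanSpace ℝ (Fin d)) (hx : x ∈ K) (hx0 : x ≠ 0)
    (p : EuclideanSpace ℝ (Fin d)) (hp : p ∈ frontier K)
    (s : ℝ) (hs : 1 ≤ s) (hps : p = s • x) :
    infDist x (frontier K) ≤ ‖x - p‖ ∧ ‖x - p‖ ≤ infDist x (frontier K) / gamma := by
  have hpK : p ∈ K := hK_compact.isClosed.frontier_subset hp
  constructor
  · calc infDist x (frontier K) ≤ dist x p := infDist_le_dist_of_mem hp
      _ = ‖x - p‖ := dist_eq_norm x p
  · rcases eq_or_lt_of_le hs with h1 | h1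
    · have hxp : x - p = 0 := by rw [hps, ← h1, one_smul, sub_self]
      rw [hxp, norm_zero]
      exact div_nonneg infDist_nonneg hγ0.le
    · have hs0 : (0:ℝ) < s := lt_trans one_pos h1
      set u : ℝ := 1 - 1/s with hu
      have hu0 : 0 < u := by
        have h2 : 1/s < 1 := by rw [div_lt_one hs0]; exact h1
        rw [hu]; linarith
      have hxp : x = (1/s) • p := by
        rw [hps, smul_smul]
        rw [one_div_mul_cancel (ne_of_gt hs0), one_smul]
      have hball : closedBall x (u * (gamma/2)) ⊆ K := by
        intro y hy
        rw [mem_closedBall, dist_eq_norm] at hy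
        set z := (1/u) • (y - x) with hz
        have hzball : z ∈ closedBall (0:EuclideanSpace ℝ (Fin d)) (gamma/2) := by
          rw [mem_closedBall, dist_zero_right, hz, norm_smul, Real.norm_eq_abs,
            abs_of_pos (by positivity : (0:ℝ) < 1/u)]
          calc (1/u) * ‖y - x‖ ≤ (1/u) * (u * (gamma/2)) :=
                mul_le_mul_of_nonneg_left hy (by positivity)
            _ = gamma/2 := by field_simp
        have hzK := hK_ball hzball
        have hmem : (1/s) • p + u • z ∈ K := by
          apply hK_conv hpK hzK (by positivity) hu0.le
          field_simp [hu]
          rw [hu, mul_sub, mul_one, mul_one_div_cancel (ne_of_gt hs0)]; ring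
        have hyeq : y = (1/s) • p + u • z := by
          rw [← hxp, hz, smul_smul, mul_one_div, div_self (ne_of_gt hu0), one_smul]
          abel
        rwa [← hyeq] at hmem
      have hr : u * (gamma/2) ≤ infDist x (frontier K) := by
        by_contra hcon
        push_neg at hcon
        obtain ⟨z, hzf, hcon⟩ := (infDist_lt_iff ⟨p, hp⟩).mp hcon
        have hzint : z ∈ interior K := by
          apply interior_maximal (Trans.trans ball_subset_closedBall hball) isOpen_ball
          rwa [mem_ball, dist_comm]
        exact hzf.2 hzint
      have hpnorm : ‖p‖ ≤ 1/2 := by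
        have := hK_ball' hpK
        rwa [mem_closedBall, dist_zero_right] at this
      have hnorm : ‖x - p‖ ≤ u / 2 := by
        have hxpe : x - p = (-u) • p := by
          rw [hxp, hu, neg_sub, sub_smul, one_smul]
        rw [hxpe, norm_smul, Real.norm_eq_abs, abs_neg, abs_of_pos hu0]
        calc u * ‖p‖ ≤ u * (1/2) := mul_le_mul_of_nonneg_left hpnorm hu0.le
          _ = u / 2 := by ring
      rw [le_div_iff₀ hγ0]
      calc ‖x - p‖ * gamma ≤ (u/2) * gamma := mul_le_mul_of_nonneg_right hnorm hγ0.le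
        _ = u * (gamma/2) := by ring
        _ ≤ infDist x (frontier K) := hr
end

section
/- Let K be a convex body in R^d in gamma-canonical form for gamma in (0,1], and let Delta_0 = (1/2)·(gamma^2/(4d))^d. Let C = {x ∈ K : <u,x> >= c} be a cap of K of width w <= Delta_0, defined by a unit vector u, and let M = sup_{x∈K} <u,x>. Let y be any point of C, and let y' be the point on the line through the origin O and y lying on the supporting hyperplane {z : <u,z> = M}, i.e. y' = (M/<u,y>)·y. Then ||y − y'|| <= 2·w/gamma. -/
open Set Metric

/-- Lemma `projection`: let `K` be a convex body in `γ`-canonical form,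
let `C` be a cap of `K` of width `w ≤ Δ₀` defined by a unit vector `u`, with
`M = sup_{x ∈ K} ⟨u,x⟩`. For any `y ∈ C`, the point `y' = (M/⟨u,y⟩)·y` where the line
`Oy` meets the supporting hyperplane `⟨u,z⟩ = M` satisfies `‖y − y'‖ ≤ 2w/γ`. -/
theorem projection_dist_le (d : ℕ) (gamma : ℝ) (hγ0 : 0 < gamma) (hγ1 : gamma ≤ 1)
    (K : Set (EuclideanSpace ℝ (Fin d)))
    (hK_compact : IsCompact K) (hK_conv : Convex ℝ K)
    (hK_int : (interior K).Nonempty)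
    (hK_ball : closedBall 0 (gamma / 2) ⊆ K) (hK_ball' : K ⊆ closedBall 0 (1 / 2))
    (u : EuclideanSpace ℝ (Fin d)) (hu : ‖u‖ = 1) (c : ℝ)
    (C : Set (EuclideanSpace ℝ (Fin d)))
    (hC : C = {x ∈ K | c ≤ (inner ℝ u x : ℝ)}) (hCne : C.Nonempty)
    (hw : sSup ((fun x => (inner ℝ u x : ℝ)) '' K) - c
        ≤ (1 / 2) * (gamma ^ 2 / (4 * d)) ^ d)
    (y : EuclideanSpace ℝ (Fin d)) (hy : y ∈ C) :
    ‖y - (sSup ((fun x => (inner ℝ u x : ℝ)) '' K) / (inner ℝ u y : ℝ)) • y‖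
      ≤ 2 * (sSup ((fun x => (inner ℝ u x : ℝ)) '' K) - c) / gamma := by
  subst hC
  obtain ⟨hyK, hyc⟩ := hy
  set M := sSup ((fun x => (inner ℝ u x : ℝ)) '' K) with hM
  set t : ℝ := inner ℝ u y with ht
  -- d ≥ 1
  have hd : 1 ≤ d := by
    by_contra h
    push_neg at h
    have hd0 : d = 0 := by omega
    subst hd0
    have : u = 0 := Subsingleton.elim u 0
    simp [this] at hu
  -- bounded above
  have hbdd : BddAbove ((fun x => (inner ℝ u x : ℝ)) '' K) := by
    refine ⟨1 / 2, ?_⟩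
    rintro z ⟨x, hx, rfl⟩
    calc (inner ℝ u x : ℝ) ≤ ‖u‖ * ‖x‖ := real_inner_le_norm u x
      _ ≤ 1 * (1 / 2) := by
          have := hK_ball' hx
          rw [mem_closedBall, dist_zero_right] at this
          exact mul_le_mul (le_of_eq hu) this (norm_nonneg x) zero_le_one
      _ = 1 / 2 := by ring
  have htM : t ≤ M := le_csSup hbdd ⟨y, hyK, rfl⟩
  -- γ/2 ≤ M
  have hγM : gamma / 2 ≤ M := by
    have hmem : (gamma / 2) • u ∈ K := by
      apply hK_ball
      rw [mem_closedBall, dist_zero_right, norm_smul, hu]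
      simp [abs_of_pos hγ0]
    have : (inner ℝ u ((gamma / 2) • u) : ℝ) = gamma / 2 := by
      rw [real_inner_smul_right, real_inner_self_eq_norm_sq, hu]
      ring
    calc gamma / 2 = (inner ℝ u ((gamma / 2) • u) : ℝ) := this.symm
      _ ≤ M := le_csSup hbdd ⟨_, hmem, rfl⟩
  -- Δ₀ ≤ γ/8
  have hΔ : (1 / 2 : ℝ) * (gamma ^ 2 / (4 * d)) ^ d ≤ gamma / 8 := by
    have hd' : (1 : ℝ) ≤ d := by exact_mod_cast hd
    have hb0 : (0 : ℝ) ≤ gamma ^ 2 / (4 * d) := by positivity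
    have hb1 : gamma ^ 2 / (4 * d) ≤ gamma / 4 := by
      rw [div_le_div_iff₀ (by positivity) (by norm_num)]
      nlinarith
    have hb1' : gamma ^ 2 / (4 * d) ≤ 1 := le_trans hb1 (by linarith)
    have : (gamma ^ 2 / (4 * d)) ^ d ≤ gamma ^ 2 / (4 * d) :=
      pow_le_of_le_one hb0 hb1' (by omega)
    nlinarith
  have hcM : M - c ≤ gamma / 8 := le_trans hw hΔ
  have hct : gamma / 4 ≤ t := by linarith
  have ht0 : 0 < t := by linarith
  -- rewrite norm
  have hrw : y - (M / t) • y = (1 - M / t) • y := by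
    rw [sub_smul, one_smul]
  rw [hrw, norm_smul]
  have habs : |1 - M / t| = (M - t) / t := by
    rw [abs_of_nonpos, neg_sub]
    · field_simp
    · rw [sub_nonpos, le_div_iff₀ ht0]; linarith
  rw [Real.norm_eq_abs, habs]
  have hny : ‖y‖ ≤ 1 / 2 := by
    have := hK_ball' hyK
    rwa [mem_closedBall, dist_zero_right] at this
  have hny0 : (0:ℝ) ≤ ‖y‖ := norm_nonneg y
  rw [div_mul_eq_mul_div, div_le_div_iff₀ ht0 hγ0]
  have h1 : (M - t) * ‖y‖ ≤ (M - c) * (1 / 2) :=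
    mul_le_mul (by linarith) hny hny0 (by linarith)
  nlinarith [mul_le_mul_of_nonneg_right h1 hγ0.le,
    mul_le_mul_of_nonneg_left (show gamma ≤ 4 * t by linarith)
      (show (0:ℝ) ≤ M - c by linarith)]
end

section
/- Let K be a convex body in R^d, let x ∈ K, and let x' ∈ M'(x) = M^{1/5}(x). Then (4/5)·delta(x) <= delta(x') <= (4/3)·delta(x). -/
open Set Metric
open scoped Pointwise

section Aux

variable {E : Type*} [NormedAddCommGroup E] [NormedSpace ℝ E]

/-- If `z ∈ K` (closed) and `w ∉ K`, the segment from `z` to `w` hits the frontier of `K`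
strictly before reaching `w`. -/
lemma aux_exists_frontier_seg {K : Set E} (hK : IsClosed K) {z w : E}
    (hz : z ∈ K) (hw : w ∉ K) :
    ∃ t : ℝ, 0 ≤ t ∧ t < 1 ∧ z + t • (w - z) ∈ frontier K := by
  set f : ℝ → E := fun t => z + t • (w - z) with hf
  have hfc : Continuous f := by fun_prop
  set S : Set ℝ := Icc 0 1 ∩ f ⁻¹' K with hS
  have hS0 : (0 : ℝ) ∈ S := ⟨⟨le_refl 0, zero_le_one⟩, by simp [f, hz]⟩
  have hSbdd : BddAbove S := ⟨1, fun t ht => ht.1.2⟩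
  have hScl : IsClosed S := isClosed_Icc.inter (hK.preimage hfc)
  have ht₀ : sSup S ∈ S := hScl.csSup_mem ⟨0, hS0⟩ hSbdd
  set t₀ := sSup S
  have ht₀0 : 0 ≤ t₀ := ht₀.1.1
  have ht₀1 : t₀ ≤ 1 := ht₀.1.2
  have hne1 : t₀ ≠ 1 := by
    intro h
    have : f 1 ∈ K := by rw [← h]; exact ht₀.2
    apply hw
    simpa [f] using this
  have ht₀lt : t₀ < 1 := lt_of_le_of_ne ht₀1 hne1
  refine ⟨t₀, ht₀0, ht₀lt, ?_⟩
  rw [frontier_eq_closure_inter_closure]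
  constructor
  · exact subset_closure ht₀.2
  · -- f t₀ ∈ closure Kᶜ : f maps (t₀, 1] into Kᶜ and t₀ is in the closure of (t₀,1]
    have himg : f '' Ioc t₀ 1 ⊆ Kᶜ := by
      rintro _ ⟨t, ht, rfl⟩ hmem
      have : t ∈ S := ⟨⟨le_trans ht₀0 ht.1.le, ht.2⟩, hmem⟩
      exact absurd (le_csSup hSbdd this) (not_le.2 ht.1)
    have hcl : t₀ ∈ closure (Ioc t₀ 1) := by
      rw [closure_Ioc (ne_of_lt ht₀lt)]
      exact ⟨le_refl _, ht₀1⟩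
    have : f t₀ ∈ f '' closure (Ioc t₀ 1) := mem_image_of_mem f hcl
    have h2 : f t₀ ∈ closure (f '' Ioc t₀ 1) := image_closure_subset_closure_image hfc this
    exact closure_mono himg h2

/-- For `z ∈ K` (closed), the closed ball of radius `infDist z (frontier K)` is inside `K`. -/
lemma aux_closedBall_subset {K : Set E} (hK : IsClosed K) {z : E} (hz : z ∈ K) :
    closedBall z (infDist z (frontier K)) ⊆ K := by
  intro w hw
  by_contra hwK
  obtain ⟨t, ht0, ht1, htf⟩ := aux_exists_frontier_seg hK hz hwK
  have hzw : z ≠ w := fun h => hwK (h ▸ hz)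
  have hdpos : 0 < dist z w := dist_pos.2 hzw
  have h1 : infDist z (frontier K) ≤ dist z (z + t • (w - z)) := infDist_le_dist_of_mem htf
  have h2 : dist z (z + t • (w - z)) = t * dist z w := by
    rw [dist_eq_norm, dist_eq_norm]
    have : z - (z + t • (w - z)) = -(t • (w - z)) := by abel
    rw [this, norm_neg, norm_smul, Real.norm_eq_abs, abs_of_nonneg ht0, norm_sub_rev]
  have h3 : t * dist z w < dist z w := by nlinarith
  have h4 : dist w z ≤ infDist z (frontier K) := mem_closedBall.1 hw
  rw [dist_comm] at h4
  linarith [h1.trans_eq h2]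

/-- If a closed ball of radius `r` around `c` is inside `K` and the frontier is nonempty,
then `r ≤ infDist c (frontier K)`. -/
lemma aux_le_infDist {K : Set E} (hfr : (frontier K).Nonempty) {c : E} {r : ℝ}
    (h : closedBall c r ⊆ K) : r ≤ infDist c (frontier K) := by
  by_contra hlt
  obtain ⟨p, hp, hpd⟩ := (infDist_lt_iff hfr).1 (not_le.1 hlt)
  have hpball : ball c r ∈ nhds p := by
    apply IsOpen.mem_nhds isOpen_ball
    rw [mem_ball, dist_comm]; exact hpd
  have hpcl : p ∈ closure Kᶜ := by
    rw [frontier_eq_closure_inter_closure] at hp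
    exact hp.2
  obtain ⟨q, hq1, hq2⟩ := mem_closure_iff_nhds.1 hpcl _ hpball
  exact hq2 (h (ball_subset_closedBall hq1))

/-- Concavity of the distance-to-boundary function on a closed convex set. -/
lemma aux_infDist_concave {K : Set E} (hK : IsClosed K) (hconv : Convex ℝ K)
    (hfr : (frontier K).Nonempty) {a b : E} (ha : a ∈ K) (hb : b ∈ K)
    {s t : ℝ} (hs : 0 ≤ s) (ht : 0 ≤ t) (hst : s + t = 1) :
    s * infDist a (frontier K) + t * infDist b (frontier K) ≤
      infDist (s • a + t • b) (frontier K) := by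
  set da := infDist a (frontier K) with hda
  set db := infDist b (frontier K) with hdb
  have hda0 : 0 ≤ da := infDist_nonneg
  have hdb0 : 0 ≤ db := infDist_nonneg
  set r := s * da + t * db with hr
  have hr0 : 0 ≤ r := by positivity
  apply aux_le_infDist hfr
  intro w hw
  have hwd : dist w (s • a + t • b) ≤ r := mem_closedBall.1 hw
  rcases eq_or_lt_of_le hr0 with h0 | hpos
  · -- r = 0, so w = s•a + t•b ∈ K
    have : dist w (s • a + t • b) ≤ 0 := hwd.trans h0.symm.le
    have : w = s • a + t • b := by
      have := le_antisymm this dist_nonneg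
      exact dist_eq_zero.1 this
    rw [this]
    exact hconv ha hb hs ht hst
  · set u := w - (s • a + t • b) with hu
    have hun : ‖u‖ ≤ r := by rwa [dist_eq_norm] at hwd
    have hpa : a + (da / r) • u ∈ K := by
      apply aux_closedBall_subset hK ha
      rw [mem_closedBall, dist_eq_norm]
      have : a + (da / r) • u - a = (da / r) • u := by abel
      rw [this, norm_smul, Real.norm_eq_abs, abs_of_nonneg (by positivity)]
      rw [div_mul_eq_mul_div, div_le_iff₀ hpos]
      nlinarith
    have hpb : b + (db / r) • u ∈ K := by
      apply aux_closedBall_subset hK hb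
      rw [mem_closedBall, dist_eq_norm]
      have : b + (db / r) • u - b = (db / r) • u := by abel
      rw [this, norm_smul, Real.norm_eq_abs, abs_of_nonneg (by positivity)]
      rw [div_mul_eq_mul_div, div_le_iff₀ hpos]
      nlinarith
    have hcomb : s • (a + (da / r) • u) + t • (b + (db / r) • u) = w := by
      have hru : u = w - (s • a + t • b) := hu
      have hrne : r ≠ 0 := ne_of_gt hpos
      have hcoef : s * (da / r) + t * (db / r) = 1 := by
        field_simp
        exact hr.symm
      rw [smul_add, smul_add, smul_smul, smul_smul, hru]
      match_scalars <;> field_simp <;> ring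
    rw [← hcomb]
    exact hconv hpa hpb hs ht hst

end Aux

/-- Lemma `core-delta`: if `x ∈ K` and `x' ∈ M'(x) = M^{1/5}(x)`, then
`(4/5)·δ(x) ≤ δ(x') ≤ (4/3)·δ(x)`. -/
theorem delta_mem_shrunken_macbeath (d : ℕ)
    (K : Set (EuclideanSpace ℝ (Fin d)))
    (hK_compact : IsCompact K) (hK_conv : Convex ℝ K)
    (hK_int : (interior K).Nonempty)
    (x x' : EuclideanSpace ℝ (Fin d)) (hx : x ∈ K)
    (hx' : x' ∈ macbeath K x (1 / 5)) :
    (4 / 5) * infDist x (frontier K) ≤ infDist x' (frontier K) ∧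
      infDist x' (frontier K) ≤ (4 / 3) * infDist x (frontier K) := by
  obtain ⟨v, ⟨hv1, hv2⟩, rfl⟩ := hx'
  obtain ⟨y, hy, z, hz, hyz⟩ := hv1
  obtain ⟨z', hz', y', hy', hy'z⟩ := hv2
  rw [mem_singleton_iff] at hz hz'
  -- v = y - x with y ∈ K, and v = x - y' with y' ∈ K
  have hv : v = y - x := by rw [← hyz, hz]
  have hv' : v = x - y' := by rw [← hy'z, hz']
  simp only []
  rcases eq_empty_or_nonempty (frontier K) with hfr | hfr
  · rw [hfr]
    simp [infDist_empty]
  have hKcl : IsClosed K := hK_compact.isClosed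
  set δ := fun p : EuclideanSpace ℝ (Fin d) => infDist p (frontier K) with hδ
  have hδx0 : 0 ≤ δ x := infDist_nonneg
  have hδy0 : 0 ≤ δ y := infDist_nonneg
  have hδy'0 : 0 ≤ δ y' := infDist_nonneg
  -- key identity: x + (1/5) v = (4/5) x + (1/5) y
  have hid1 : (4/5 : ℝ) • x + (1/5 : ℝ) • y = x + (1/5 : ℝ) • v := by
    rw [hv]; match_scalars <;> ring
  -- key identity: (5/6) (x + (1/5) v) + (1/6) y' = x  (using v = x - y')
  have hid2 : (5/6 : ℝ) • (x + (1/5 : ℝ) • v) + (1/6 : ℝ) • y' = x := by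
    rw [hv']; match_scalars <;> ring
  have hx'K : x + (1/5 : ℝ) • v ∈ K := by
    rw [← hid1]
    exact hK_conv hx hy (by norm_num) (by norm_num) (by norm_num)
  constructor
  · -- lower bound via concavity at (4/5, 1/5) of x, y
    have h := aux_infDist_concave hKcl hK_conv hfr hx hy
      (s := 4/5) (t := 1/5) (by norm_num) (by norm_num) (by norm_num)
    rw [hid1] at h
    have : (4/5 : ℝ) * δ x ≤ (4/5 : ℝ) * δ x + (1/5 : ℝ) * δ y := by linarith
    calc (4/5 : ℝ) * δ x ≤ (4/5 : ℝ) * δ x + (1/5 : ℝ) * δ y := this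
      _ ≤ δ (x + (1/5 : ℝ) • v) := h
  · -- upper bound via concavity at (5/6, 1/6) of x', y'
    have h := aux_infDist_concave hKcl hK_conv hfr hx'K hy'
      (s := 5/6) (t := 1/6) (by norm_num) (by norm_num) (by norm_num)
    rw [hid2] at h
    have hδx'0 : 0 ≤ δ (x + (1/5 : ℝ) • v) := infDist_nonneg
    linarith
end
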